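/- For m ≥ 1 and v = Σ_{i=0}^m a_i v_i, define the 2×m matrix X(v) with rows (binom(m-1,m-1)a_{m-1}, −binom(m-1,m-2)a_{m-2}, ..., binom(m-1,0)a_0) and (binom(m-1,m-1)a_m, −binom(m-1,m-2)a_{m-1}, ..., binom(m-1,0)a_1), and the m×2 matrix Y(v) whose transpose has rows (a_1, a_2, ..., a_m) and (−a_0, −a_1, ..., −a_{m-1}). Then X(v_i)Y(v_j) − X(v_j)Y(v_i) = (−1)^i·binom(m,i)·I_2 if i + j = m, and equals 0 otherwise. -/

import Mathlib

open Matrix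

variable (F : Type*) [Field F] [CharZero F]

/-- The `2 × m` matrix `X(v)` for `v = Σ a_i v_i`, with rows
`(C(m-1,m-1)a_{m-1}, -C(m-1,m-2)a_{m-2}, ..., C(m-1,0)a_0)` and
`(C(m-1,m-1)a_m, -C(m-1,m-2)a_{m-1}, ..., C(m-1,0)a_1)`. -/
def X10 (m : ℕ) (hm : 1 ≤ m) (a : Fin (m + 1) → F) : Matrix (Fin 2) (Fin m) F :=
  Matrix.of fun r k =>
    if r = 0 then
      (-1 : F) ^ (k : ℕ) * ((m - 1).choose (m - 1 - (k : ℕ))) *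
        a ⟨m - 1 - (k : ℕ), by omega⟩
    else
      (-1 : F) ^ (k : ℕ) * ((m - 1).choose (m - 1 - (k : ℕ))) *
        a ⟨m - (k : ℕ), by omega⟩

/-- The `m × 2` matrix `Y(v)` for `v = Σ a_i v_i`, whose transpose has rows
`(a_1, a_2, ..., a_m)` and `(-a_0, -a_1, ..., -a_{m-1})`. -/
def Y10 (m : ℕ) (hm : 1 ≤ m) (a : Fin (m + 1) → F) : Matrix (Fin m) (Fin 2) F :=
  Matrix.of fun k c =>
    if c = 0 then a ⟨(k : ℕ) + 1, by omega⟩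
    else - a ⟨(k : ℕ), by omega⟩

/-!
Each row of `X(v_i)` and each column of `Y(v_j)` has at most one nonzero entry, so the `(r, c)`
entry of `X(v_i) Y(v_j)` is a single signed binomial `±C(m-1, i-r)`, present only when
`i + j + c = m + r`. In the antisymmetrization the off-diagonal entries cancel because the row
`(-1)^k C(m-1, k)` is palindromic for `m - 1` even, and the diagonal entries combine by Pascal's
rule into `(-1)^i C(m, i)`.
-/

lemma choose_add_choose_of_add_eq {m i j r : ℕ} (hm : 1 ≤ m) (hij : i + j = m) (hr : r ≤ 1) :
    ((if r ≤ i ∧ 1 ≤ j + r then (m - 1).choose (i - r) else 0) +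
      if r ≤ j ∧ 1 ≤ i + r then (m - 1).choose (j - r) else 0) = m.choose i := by
  subst hij
  rcases i with _ | a <;> rcases j with _ | b
  · simp at hm
  · interval_cases r <;> simp
  · interval_cases r <;> simp
  · have hsymm : (a + b + 1).choose (b + 1) = (a + b + 1).choose a :=
      Nat.choose_symm_of_eq_add (by omega)
    have hsymm' : (a + b + 1).choose b = (a + b + 1).choose (a + 1) :=
      Nat.choose_symm_of_eq_add (by omega)
    rw [show a + 1 + (b + 1) = a + b + 1 + 1 by omega, Nat.choose_succ_succ', Nat.add_sub_cancel]
    interval_cases r <;> simp [hsymm, hsymm', add_comm]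

/-- The `(r, c)` entry of `X(v_i) Y(v_j)`. -/
def prodSingleEntry (R : Type*) [CommRing R] (m i j : ℕ) (r c : Fin 2) : R :=
  if i + j + c = m + r ∧ (r : ℕ) ≤ i ∧ 1 ≤ j + c
  then (-1) ^ (j + 1) * ((m - 1).choose (i - r)) else 0

lemma prodSingleEntry_sub_swap {R : Type*} [CommRing R] {m i j : ℕ} (hm : Odd m) (hi : i ≤ m)
    (hj : j ≤ m) (r c : Fin 2) :
    prodSingleEntry R m i j r c - prodSingleEntry R m j i r c =
      if i + j = m then (if r = c then (-1) ^ i * (m.choose i : R) else 0) else 0 := by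
  have hr := r.isLt
  unfold prodSingleEntry
  by_cases hrc : r = c
  · subst hrc
    by_cases hij : i + j = m
    · have hsign : (-1 : R) ^ (j + 1) = (-1) ^ i :=
        neg_one_pow_congr (by simp only [Nat.even_iff]; rcases hm with ⟨n, hn⟩; omega)
      have hji : j + i = m := by omega
      rw [if_pos hij, if_pos rfl, ← choose_add_choose_of_add_eq hm.pos hij (r := r) (by omega),
        hsign, pow_succ]
      simp only [hij, hji, true_and]
      push_cast [apply_ite]
      split_ifs <;> ring
    · rw [if_neg hij, if_neg (by omega), if_neg (by omega), sub_zero]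
  · rw [if_neg hrc, ite_self]
    by_cases h : i + j + c = m + r
    · have hc := c.isLt
      have hsign : (-1 : R) ^ (j + 1) = (-1) ^ (i + 1) :=
        neg_one_pow_congr (by simp only [Nat.even_iff]; rcases hm with ⟨n, hn⟩; omega)
      rw [if_pos (by omega), if_pos (by omega), hsign,
        Nat.choose_symm_of_eq_add (by omega : m - 1 = (i - r) + (j - r)), sub_self]
    · rw [if_neg (by omega), if_neg (by omega), sub_zero]

section

variable {K : Type*} [Field K] {m : ℕ} (hm : 1 ≤ m)

lemma X10_apply (a : Fin (m + 1) → K) (r : Fin 2) (k : Fin m) :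
    X10 K m hm a r k =
      (-1) ^ (k : ℕ) * ((m - 1).choose (m - 1 - k)) * a ⟨m - 1 - k + r, by omega⟩ := by
  fin_cases r
  · simp [X10]
  · simp only [X10, of_apply, Fin.mk_one, one_ne_zero, if_false]
    congr 2
    exact Fin.ext (by simp; omega)

lemma Y10_apply (b : Fin (m + 1) → K) (k : Fin m) (c : Fin 2) :
    Y10 K m hm b k c = (-1) ^ (c : ℕ) * b ⟨k + 1 - c, by omega⟩ := by
  fin_cases c <;> simp [Y10]

lemma X10_single_mul_Y10_single_apply (i j : Fin (m + 1)) (r c : Fin 2) :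
    (X10 K m hm (Pi.single i 1) * Y10 K m hm (Pi.single j 1)) r c =
      prodSingleEntry K m i j r c := by
  have hr := r.isLt
  have hc := c.isLt
  simp only [prodSingleEntry, mul_apply, X10_apply, Y10_apply, Pi.single_apply, Fin.ext_iff,
    mul_ite, mul_one, mul_zero, ite_mul, zero_mul]
  split_ifs with h
  · rw [Fintype.sum_eq_single ⟨j + c - 1, by omega⟩ fun k hk => ?_]
    · have hsign : (-1 : K) ^ ((j : ℕ) + c - 1) * (-1) ^ (c : ℕ) = (-1) ^ ((j : ℕ) + 1) := by
        rw [← pow_add]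
        exact neg_one_pow_congr (by simp only [Nat.even_iff]; omega)
      rw [if_pos (by simp; omega), if_pos (by simp; omega),
        show m - 1 - (j + c - 1) = i - r by omega]
      linear_combination ((m - 1).choose (i - r) : K) * hsign
    · simp only [ne_eq, Fin.ext_iff] at hk
      split_ifs <;> first | rfl | omega
  · refine Finset.sum_eq_zero fun k _ => ?_
    split_ifs <;> first | rfl | omega

end

theorem stmt_10 (n m : ℕ) (hm : m = 2 * n - 1) (hm1 : 1 ≤ m)
    (i j : Fin (m + 1)) :
    X10 F m hm1 (Pi.single i 1) * Y10 F m hm1 (Pi.single j 1)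
      - X10 F m hm1 (Pi.single j 1) * Y10 F m hm1 (Pi.single i 1) =
    if (i : ℕ) + (j : ℕ) = m
      then ((-1 : F) ^ (i : ℕ) * (m.choose (i : ℕ))) •
        (1 : Matrix (Fin 2) (Fin 2) F)
      else 0 := by
  have hodd : Odd m := ⟨n - 1, by omega⟩
  ext r c
  rw [Matrix.sub_apply, X10_single_mul_Y10_single_apply, X10_single_mul_Y10_single_apply,
    prodSingleEntry_sub_swap hodd (Nat.le_of_lt_succ i.isLt) (Nat.le_of_lt_succ j.isLt)]
  by_cases hij : (i : ℕ) + j = m <;> simp [hij, one_apply]
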